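/- For n ∉ {3,5,7}, n ≥ 3, we have Sp(W,n) ≥ Σ_{i=0}^{⌊n/3⌋−1} Σ_{j=0}^{i} 3^j · C(i,j) · C(n−3i−3, ⌊(n−1)/2⌋+j−3i), where Sp(W,n) is the maximum number of pairwise unrelated copies of the poset W in P([n]) and binomial coefficients with out-of-range lower index are 0. -/

import Mathlib

/-- The 4-element poset `W`: a bottom element (`none`) below three pairwise
incomparable maximal elements (`some 0`, `some 1`, `some 2`). -/
def WPoset : Type := Option (Fin 3)

instance : PartialOrder WPoset where
  le x y := x = none ∨ x = y
  le_refl x := Or.inr rfl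
  le_trans x y z h₁ h₂ := by
    rcases h₁ with h | h
    · exact Or.inl h
    · subst h; exact h₂
  le_antisymm x y h₁ h₂ := by
    rcases h₁ with h | h
    · rcases h₂ with g | g
      · exact h.trans g.symm
      · exact g.symm
    · exact h

/-!
Write `m = ⌊(n - 1) / 2⌋` and cut `{0, …, n - 1}` into blocks `{3l, 3l + 1, 3l + 2}`. A copy of `W`
of level `i` has an `m`-element bottom `A` which misses block `i` and meets every earlier block in
at least two points; its tops are `A ∪ {3i + t}`, `t < 3`. A containment between members of two
such copies gives `A ⊆ A' ∪ {x'}` with `x'` in the block of the level `i'` of `A'`. If `i < i'`,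
block `i` holds two points of `A' \ A`, while `|A' \ A| = |A \ A'| ≤ 1`; if `i > i'`, block `i'`
holds two points of `A` but at most one of `A' ∪ {x'}`. So `i = i'`, hence `x' ∉ A` and `A = A'`.
Bottoms of level `i` are counted by choosing the `j` earlier blocks that lose a point, and which
point (`C(i, j) · 3 ^ j` ways), and the `m + j - 3i` points above block `i`.
-/

open Finset Function

def sigmaOrderEmbedding {ι β : Type*} {α : ι → Type*} [∀ i, PartialOrder (α i)] [Preorder β] (f : ∀ i, α i → β)
    (hf : ∀ i a b, f i a ≤ f i b ↔ a ≤ b) (hsep : ∀ i j a b, f i a ≤ f j b → i = j) :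
    (Σ i, α i) ↪o β :=
  OrderEmbedding.ofMapLEIff (fun x => f x.1 x.2) <| by
    rintro ⟨i, a⟩ ⟨j, b⟩
    constructor
    · intro h
      obtain rfl := hsep i j a b h
      exact Sigma.mk_le_mk_iff.2 ((hf i a b).1 h)
    · rw [Sigma.le_def]
      rintro ⟨rfl : i = j, h⟩
      exact (hf i a b).2 h

lemma bddAbove_setOf_nonempty_sigma_orderEmbedding (α β : Type*) [LE α] [Nonempty α] [LE β]
    [Fintype β] : BddAbove {k : ℕ | Nonempty ((Σ _ : Fin k, α) ↪o β)} := by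
  refine ⟨Fintype.card β, fun k ⟨f⟩ => ?_⟩
  have hinj : Injective fun x : Fin k => f ⟨x, Classical.arbitrary α⟩ :=
    fun a b hab => congrArg Sigma.fst (f.injective hab)
  simpa using Fintype.card_le_of_injective _ hinj

lemma preimage_val_subset_preimage_val_iff {n : ℕ} {s t : Finset ℕ} (hs : s ⊆ range n) :
    ((↑) ⁻¹' (s : Set ℕ) : Set (Fin n)) ⊆ (↑) ⁻¹' (t : Set ℕ) ↔ s ⊆ t := by
  rw [Set.preimage_subset_preimage_iff fun x hx => by simpa using hs hx, coe_subset]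

section WCopy

variable {α : Type*} [DecidableEq α]

def wCopy (A : Finset α) (f : Fin 3 → α) : WPoset → Finset α
  | none => A
  | some t => insert (f t) A

lemma subset_wCopy (A : Finset α) (f : Fin 3 → α) (w : WPoset) : A ⊆ wCopy A f w := by
  cases w <;> simp [wCopy, subset_insert]

lemma wCopy_subset_insert (A : Finset α) (f : Fin 3 → α) (w : WPoset) :
    wCopy A f w ⊆ insert (f (w.getD 0)) A := by
  cases w <;> simp [wCopy, subset_insert]

lemma wCopy_subset_wCopy_iff {A : Finset α} {f : Fin 3 → α} (hf : Injective f)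
    (hA : ∀ t, f t ∉ A) {w w' : WPoset} : wCopy A f w ⊆ wCopy A f w' ↔ w ≤ w' := by
  change _ ↔ @Eq (Option (Fin 3)) w none ∨ @Eq (Option (Fin 3)) w w'
  cases w <;> cases w' <;> simp [wCopy, subset_insert, insert_subset_iff, hA, hf.eq_iff]

end WCopy

namespace SpW

def block (l : ℕ) : Finset ℕ := Ico (3 * l) (3 * l + 3)

lemma card_block (l : ℕ) : #(block l) = 3 := by
  simp [block]

structure IsBottomSet (m i : ℕ) (A : Finset ℕ) : Prop where
  card_eq : #A = m
  disjoint_block : Disjoint A (block i)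
  two_le_card_inter_block : ∀ l < i, 2 ≤ #(A ∩ block l)

theorem IsBottomSet.eq_of_subset_insert {m i i' x : ℕ} {A A' : Finset ℕ}
    (hA : IsBottomSet m i A) (hA' : IsBottomSet m i' A') (hx : x ∈ block i')
    (h : A ⊆ insert x A') : i = i' ∧ A = A' := by
  rcases lt_trichotomy i i' with hlt | rfl | hgt
  · exfalso
    have hsep : A' ∩ block i ⊆ A' \ A := fun y hy => by
      rw [mem_inter] at hy
      exact mem_sdiff.2 ⟨hy.1, fun hyA => disjoint_left.1 hA.disjoint_block hyA hy.2⟩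
    have hnew : A \ A' ⊆ {x} := fun y hy => by
      rw [mem_sdiff] at hy
      simpa [hy.2] using h hy.1
    have hle : #(A' \ A) ≤ 1 := by
      rw [← card_sdiff_comm (hA.card_eq.trans hA'.card_eq.symm)]
      exact (card_le_card hnew).trans (card_singleton x).le
    have := (hA'.two_le_card_inter_block i hlt).trans (card_le_card hsep)
    omega
  · have hxA : x ∉ A := fun hxA => disjoint_left.1 hA.disjoint_block hxA hx
    exact ⟨rfl, eq_of_subset_of_card_le ((subset_insert_iff_of_notMem hxA).1 h)
      (hA'.card_eq.trans hA.card_eq.symm).le⟩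
  · exfalso
    have hx' : A ∩ block i' ⊆ {x} := fun y hy => by
      rw [mem_inter] at hy
      have hyA' : y ∉ A' := fun hyA' => disjoint_left.1 hA'.disjoint_block hyA' hy.2
      simpa [hyA'] using h hy.1
    have := (hA.two_le_card_inter_block i' hgt).trans
      ((card_le_card hx').trans (card_singleton x).le)
    omega

section PartialColoring

variable {i : ℕ}

abbrev PartialColoring (i : ℕ) := Σ S : Finset (Fin i), ∀ l ∈ S, Fin 3

def partialColorings (i j : ℕ) : Finset (PartialColoring i) :=
  (powersetCard j univ).sigma fun S => S.pi fun _ => univ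

lemma card_partialColorings (i j : ℕ) : #(partialColorings i j) = i.choose j * 3 ^ j := by
  rw [partialColorings, card_sigma, sum_congr rfl fun S hS => ?_, sum_const, smul_eq_mul,
    card_powersetCard, card_univ, Fintype.card_fin]
  rw [card_pi, prod_const, card_univ, Fintype.card_fin, (mem_powersetCard.1 hS).2]

lemma card_fst_of_mem_partialColorings {j : ℕ} {q : PartialColoring i}
    (hq : q ∈ partialColorings i j) : #q.1 = j :=
  (mem_powersetCard.1 (mem_sigma.1 hq).1).2

def removed (q : PartialColoring i) : Finset ℕ :=
  q.1.attach.image fun l => 3 * l.1 + q.2 l.1 l.2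

lemma mem_removed {q : PartialColoring i} {x : ℕ} :
    x ∈ removed q ↔ ∃ l, ∃ h : l ∈ q.1, 3 * (l : ℕ) + q.2 l h = x := by
  simp [removed]

lemma three_mul_add_mem_removed {q : PartialColoring i} {l : Fin i} {t : Fin 3} :
    3 * (l : ℕ) + t ∈ removed q ↔ ∃ h : l ∈ q.1, q.2 l h = t := by
  constructor
  · rw [mem_removed]
    rintro ⟨l', hl', he⟩
    obtain rfl : l' = l := Fin.ext (by have := (q.2 l' hl').2; omega)
    exact ⟨hl', Fin.ext (by omega)⟩
  · rintro ⟨hl, rfl⟩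
    exact mem_removed.2 ⟨l, hl, rfl⟩

lemma removed_injective : Injective (removed (i := i)) := by
  have transfer {q q' : PartialColoring i} (h : removed q = removed q') (l : Fin i)
      (hl : l ∈ q.1) : ∃ hl' : l ∈ q'.1, q'.2 l hl' = q.2 l hl :=
    three_mul_add_mem_removed.1 (h ▸ three_mul_add_mem_removed.2 ⟨hl, rfl⟩)
  rintro ⟨S, c⟩ ⟨S', c'⟩ h
  obtain rfl : S = S' :=
    Finset.ext fun l => ⟨fun hl => (transfer h l hl).fst, fun hl => (transfer h.symm l hl).fst⟩
  congr
  funext l hl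
  exact (transfer h l hl).snd.symm

lemma removed_subset_range (q : PartialColoring i) : removed q ⊆ range (3 * i) := by
  intro x hx
  obtain ⟨l, hl, rfl⟩ := mem_removed.1 hx
  have := (q.2 l hl).2
  simp only [mem_range]
  omega

lemma card_removed (q : PartialColoring i) : #(removed q) = #q.1 := by
  rw [removed, card_image_of_injective, card_attach]
  intro a b hab
  have := (q.2 a.1 a.2).2
  have := (q.2 b.1 b.2).2
  exact Subtype.ext (Fin.ext (by simp only at hab; omega))

lemma card_removed_inter_block_le_one (q : PartialColoring i) (l : ℕ) :
    #(removed q ∩ block l) ≤ 1 := by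
  refine card_le_one.2 fun x hx y hy => ?_
  simp only [mem_inter, block, mem_Ico] at hx hy
  obtain ⟨a, ha, rfl⟩ := mem_removed.1 hx.1
  obtain ⟨b, hb, rfl⟩ := mem_removed.1 hy.1
  have := (q.2 a ha).2
  have := (q.2 b hb).2
  obtain rfl : a = b := Fin.ext (by omega)
  rfl

end PartialColoring

/-- `⟨i, j, R, T⟩`: the level `i`, the number `j` of earlier blocks losing a point, the set `R`
of removed points and the set `T` of points above block `i`. -/
abbrev Param := Σ _ : ℕ, Σ _ : ℕ, Finset ℕ × Finset ℕ

def params (n : ℕ) : Finset Param :=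
  (range (n / 3)).sigma fun i => (range (i + 1)).sigma fun j =>
    if 3 * i ≤ (n - 1) / 2 + j then
      (partialColorings i j).image removed ×ˢ
        powersetCard ((n - 1) / 2 + j - 3 * i) (Ico (3 * i + 3) n)
    else ∅

lemma card_params (n : ℕ) : #(params n) = ∑ i ∈ range (n / 3), ∑ j ∈ range (i + 1),
    if 3 * i ≤ (n - 1) / 2 + j then
      3 ^ j * i.choose j * (n - 3 * i - 3).choose ((n - 1) / 2 + j - 3 * i) else 0 := by
  simp only [params, card_sigma]
  refine sum_congr rfl fun i _ => sum_congr rfl fun j _ => ?_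
  split_ifs
  · rw [card_product, card_image_of_injective _ removed_injective, card_partialColorings,
      card_powersetCard, Nat.card_Ico, Nat.sub_add_eq]
    ring
  · rfl

lemma mem_params {n i j : ℕ} {R T : Finset ℕ} : ⟨i, j, R, T⟩ ∈ params n ↔
    i < n / 3 ∧ j ≤ i ∧ 3 * i ≤ (n - 1) / 2 + j ∧ (∃ q ∈ partialColorings i j, removed q = R) ∧
      T ⊆ Ico (3 * i + 3) n ∧ #T = (n - 1) / 2 + j - 3 * i := by
  simp only [params, mem_sigma, mem_range, Nat.lt_succ_iff]
  split_ifs with h <;> simp [h]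

def bottom (i : ℕ) (R T : Finset ℕ) : Finset ℕ := T ∪ (range (3 * i) \ R)

section Bottom

variable {n i j : ℕ} {R T : Finset ℕ}

lemma disjoint_range_of_subset_Ico (hT : T ⊆ Ico (3 * i + 3) n) : Disjoint T (range (3 * i)) :=
  disjoint_left.2 fun x hx hx' => by
    have := mem_Ico.1 (hT hx)
    rw [mem_range] at hx'
    omega

lemma range_sdiff_bottom (hR : R ⊆ range (3 * i)) (hT : Disjoint T (range (3 * i))) :
    range (3 * i) \ bottom i R T = R := by
  ext x
  have hTx : x ∈ T → x ∉ range (3 * i) := fun hx => disjoint_left.1 hT hx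
  have hRx : x ∈ R → x ∈ range (3 * i) := fun hx => hR hx
  simp only [bottom, mem_sdiff, mem_union, mem_range] at *
  tauto

lemma bottom_sdiff_range (hT : Disjoint T (range (3 * i))) : bottom i R T \ range (3 * i) = T := by
  ext x
  have hTx : x ∈ T → x ∉ range (3 * i) := fun hx => disjoint_left.1 hT hx
  simp only [bottom, mem_sdiff, mem_union, mem_range] at *
  tauto

lemma isBottomSet_bottom (hp : ⟨i, j, R, T⟩ ∈ params n) :
    IsBottomSet ((n - 1) / 2) i (bottom i R T) := by
  obtain ⟨-, -, hguard, ⟨q, hq, rfl⟩, hT, hTcard⟩ := mem_params.1 hp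
  have hTr := disjoint_range_of_subset_Ico hT
  have hR : #(removed q) = j := (card_removed q).trans (card_fst_of_mem_partialColorings hq)
  refine ⟨?_, ?_, fun l hl => ?_⟩
  · have hj : j ≤ 3 * i := by simpa [hR] using card_le_card (removed_subset_range q)
    rw [bottom, card_union_of_disjoint (hTr.mono_right sdiff_subset),
      card_sdiff_of_subset (removed_subset_range q), card_range, hR, hTcard]
    omega
  · rw [disjoint_left]
    intro x hx hxb
    simp only [bottom, mem_union, mem_sdiff, mem_range, block, mem_Ico] at hx hxb
    rcases hx with hx | hx
    · have := mem_Ico.1 (hT hx)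
      omega
    · omega
  · have hsub : block l \ removed q ⊆ bottom i (removed q) T ∩ block l := fun x hx => by
      simp only [bottom, block, mem_inter, mem_union, mem_sdiff, mem_range, mem_Ico] at hx ⊢
      exact ⟨Or.inr ⟨by omega, hx.2⟩, hx.1⟩
    have := card_removed_inter_block_le_one q l
    calc 2 ≤ #(block l) - #(removed q ∩ block l) := by rw [card_block]; omega
      _ = #(block l \ removed q) := card_sdiff.symm
      _ ≤ _ := card_le_card hsub

lemma bottom_subset_range (hp : ⟨i, j, R, T⟩ ∈ params n) : bottom i R T ⊆ range n := by
  obtain ⟨hi, -, -, -, hT, -⟩ := mem_params.1 hp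
  intro x hx
  simp only [bottom, mem_union, mem_sdiff, mem_range] at hx ⊢
  rcases hx with hx | hx
  · exact (mem_Ico.1 (hT hx)).2
  · omega

end Bottom

lemma bottom_injOn (n : ℕ) :
    Set.InjOn (fun p : Param => bottom p.1 p.2.2.1 p.2.2.2) (params n) := by
  rintro ⟨i, j, R, T⟩ hp ⟨i', j', R', T'⟩ hp' h
  simp only at h
  obtain ⟨rfl, -⟩ := (isBottomSet_bottom hp).eq_of_subset_insert (isBottomSet_bottom hp')
    (x := 3 * i') (by simp [block]) (h ▸ subset_insert _ _)
  obtain ⟨-, -, -, ⟨q, hq, rfl⟩, hT, -⟩ := mem_params.1 hp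
  obtain ⟨-, -, -, ⟨q', hq', rfl⟩, hT', -⟩ := mem_params.1 hp'
  have hTr := disjoint_range_of_subset_Ico hT
  have hTr' := disjoint_range_of_subset_Ico hT'
  obtain rfl : q = q' := removed_injective <| by
    rw [← range_sdiff_bottom (removed_subset_range q) hTr, h,
      range_sdiff_bottom (removed_subset_range q') hTr']
  obtain rfl : T = T' := by rw [← bottom_sdiff_range hTr, h, bottom_sdiff_range hTr']
  obtain rfl : j = j' :=
    (card_fst_of_mem_partialColorings hq).symm.trans (card_fst_of_mem_partialColorings hq')
  rfl

def copy (p : Param) : WPoset → Finset ℕ :=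
  wCopy (bottom p.1 p.2.2.1 p.2.2.2) fun t => 3 * p.1 + t

section Copy

variable {n : ℕ} {p p' : Param}

lemma copy_subset_copy_iff (hp : p ∈ params n) {w w' : WPoset} :
    copy p w ⊆ copy p w' ↔ w ≤ w' := by
  obtain ⟨i, j, R, T⟩ := p
  refine wCopy_subset_wCopy_iff (fun t t' h => Fin.ext (by simpa using h)) fun t ht => ?_
  exact disjoint_left.1 (isBottomSet_bottom hp).disjoint_block ht (by simp [block])

lemma eq_of_copy_subset_copy (hp : p ∈ params n) (hp' : p' ∈ params n) {w w' : WPoset}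
    (h : copy p w ⊆ copy p' w') : p = p' := by
  obtain ⟨i, j, R, T⟩ := p
  obtain ⟨i', j', R', T'⟩ := p'
  have hsub := (subset_wCopy _ _ w).trans (h.trans (wCopy_subset_insert _ _ w'))
  obtain ⟨rfl, hbot⟩ := (isBottomSet_bottom hp).eq_of_subset_insert (isBottomSet_bottom hp')
    (by simp [block]) hsub
  exact bottom_injOn n hp hp' hbot

lemma copy_subset_range (hp : p ∈ params n) (w : WPoset) : copy p w ⊆ range n := by
  obtain ⟨i, j, R, T⟩ := p
  have hi := (mem_params.1 hp).1
  refine (wCopy_subset_insert _ _ w).trans (insert_subset_iff.2 ⟨?_, bottom_subset_range hp⟩)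
  have ht := (w.getD 0).2
  simp only [mem_range]
  omega

end Copy

noncomputable def copiesEmbedding (n : ℕ) : (Σ _ : Fin #(params n), WPoset) ↪o Set (Fin n) :=
  let e := (params n).equivFin.symm
  sigmaOrderEmbedding (fun k w => (↑) ⁻¹' (copy (e k) w : Set ℕ))
    (fun k _ _ => (preimage_val_subset_preimage_val_iff (copy_subset_range (e k).2 _)).trans
      (copy_subset_copy_iff (e k).2))
    (fun k k' _ _ h => e.injective <| Subtype.ext <| eq_of_copy_subset_copy (e k).2 (e k').2 <|
      (preimage_val_subset_preimage_val_iff (copy_subset_range (e k).2 _)).1 h)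

end SpW

instance : Nonempty WPoset := ⟨none⟩

theorem stmt_18_general (n : ℕ) :
    (∑ i ∈ Finset.range (n / 3), ∑ j ∈ Finset.range (i + 1),
        if 3 * i ≤ (n - 1) / 2 + j then
          3 ^ j * i.choose j * (n - 3 * i - 3).choose ((n - 1) / 2 + j - 3 * i)
        else 0)
      ≤ sSup {k : ℕ | Nonempty ((Σ _ : Fin k, WPoset) ↪o Set (Fin n))} := by
  rw [← SpW.card_params]
  exact le_csSup (bddAbove_setOf_nonempty_sigma_orderEmbedding _ _) ⟨SpW.copiesEmbedding n⟩

/-- Lower estimate: for `n ≥ 3` with `n ∉ {3,5,7}`,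
`Sp(W,n) ≥ Σ_{i=0}^{⌊n/3⌋−1} Σ_{j=0}^{i} 3^j C(i,j) C(n−3i−3, ⌊(n−1)/2⌋+j−3i)`,
where binomial coefficients with negative lower index are `0` (expressed by the
guard `3*i ≤ (n−1)/2 + j`). -/
theorem stmt_18 (n : ℕ) (hn : 3 ≤ n) (h3 : n ≠ 3) (h5 : n ≠ 5) (h7 : n ≠ 7) :
    (∑ i ∈ Finset.range (n / 3), ∑ j ∈ Finset.range (i + 1),
        if 3 * i ≤ (n - 1) / 2 + j then
          3 ^ j * i.choose j * (n - 3 * i - 3).choose ((n - 1) / 2 + j - 3 * i)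
        else 0)
      ≤ sSup {k : ℕ | Nonempty ((Σ _ : Fin k, WPoset) ↪o Set (Fin n))} :=
  stmt_18_general n
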